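/- Let U be a finite set of bidders with budgets B : U → ℝ, B(u) > 0, and let queries arrive in order i = 1, …, t with bids w : U × {1,…,t} → ℝ, w(u,i) ≥ 0. Define the greedy allocation recursively: spent₀(u) = 0; at step i, the available set is Aᵢ = {u : spentᵢ₋₁(u) < B(u)}; if Aᵢ ≠ ∅, query i is assigned to some u*ᵢ ∈ Aᵢ maximizing w(u,i) over u ∈ Aᵢ, and spentᵢ(u*ᵢ) = spentᵢ₋₁(u*ᵢ) + w(u*ᵢ, i), with spentᵢ(u) = spentᵢ₋₁(u) for all other u. Assume the small-bids idealization: for every step i and every u ∈ Aᵢ, spentᵢ₋₁(u) + w(u,i) ≤ B(u). Then the greedy revenue Σᵢ w(u*ᵢ, i) is at least (1/2)·Σ_{u,i} x(u,i)·w(u,i) for every fractional offline allocation x : U × {1,…,t} → ℝ satisfying x(u,i) ≥ 0, Σᵢ x(u,i)·w(u,i) ≤ B(u) for all u, and Σ_u x(u,i) ≤ 1 for all i. -/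
import Mathlib

open Finset

/-- Theorem 1: the greedy algorithm achieves a ratio of `1/2` for the AdWords
problem with the small-bids assumption. -/
theorem greedy_half_competitive {U : Type*} [Fintype U] [DecidableEq U] (t : ℕ)
    (B : U → ℝ) (hB : ∀ u, 0 < B u)
    (w : U × Fin t → ℝ) (hw : ∀ u i, 0 ≤ w (u, i))
    (spent : ℕ → U → ℝ) (sel : Fin t → Option U)
    (hspent0 : ∀ u, spent 0 u = 0)
    (hsel : ∀ (i : Fin t) (u' : U), sel i = some u' →
      spent i u' < B u' ∧ ∀ u, spent i u < B u → w (u, i) ≤ w (u', i))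
    (hnone : ∀ i : Fin t, sel i = none → ∀ u, ¬ spent i u < B u)
    (hupdate : ∀ (i : Fin t) (u : U),
      spent ((i : ℕ) + 1) u = spent i u + (if sel i = some u then w (u, i) else 0))
    (hsmall : ∀ (i : Fin t) (u : U), spent i u < B u → spent i u + w (u, i) ≤ B u)
    (x : U × Fin t → ℝ) (hx0 : ∀ u i, 0 ≤ x (u, i))
    (hxB : ∀ u, ∑ i, x (u, i) * w (u, i) ≤ B u)
    (hx1 : ∀ i, ∑ u, x (u, i) ≤ 1) :
    (1 / 2) * ∑ u, ∑ i, x (u, i) * w (u, i) ≤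
      ∑ i, (match sel i with | some u => w (u, i) | none => 0) := by
  classical
  set gain : Fin t → ℝ := fun i => match sel i with | some u => w (u, i) | none => 0 with hg
  -- gain is nonneg
  have hgain0 : ∀ i, 0 ≤ gain i := by
    intro i
    rw [hg]
    rcases h : sel i with _ | u <;> simp [h, hw]
  -- one step monotone
  have hstep : ∀ (i : Fin t) (u : U), spent i u ≤ spent ((i : ℕ) + 1) u := by
    intro i u
    rw [hupdate]
    have : (0:ℝ) ≤ (if sel i = some u then w (u, i) else 0) := by
      split <;> simp [hw]
    linarith
  -- monotone
  have hmono : ∀ u : U, ∀ n m : ℕ, n ≤ m → m ≤ t → spent n u ≤ spent m u := by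
    intro u n m hnm hmt
    induction m with
    | zero => simp [Nat.le_zero.mp hnm]
    | succ m ih =>
      rcases Nat.lt_or_ge n (m + 1) with h | h
      · have h1 : n ≤ m := Nat.lt_succ_iff.mp h
        have h2 : m ≤ t := le_of_lt (Nat.lt_of_succ_le hmt)
        calc spent n u ≤ spent m u := ih h1 h2
          _ ≤ spent (m + 1) u := hstep ⟨m, Nat.lt_of_succ_le hmt⟩ u
      · have : n = m + 1 := le_antisymm hnm h
        simp [this]
  -- closed form for spent
  have hform : ∀ n, n ≤ t → ∀ u : U,
      spent n u = ∑ i : Fin t, if (i : ℕ) < n then (if sel i = some u then w (u, i) else 0) else 0 := by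
    intro n hn
    induction n with
    | zero => intro u; simp [hspent0]
    | succ n ih =>
      intro u
      have hnt : n < t := Nat.lt_of_succ_le hn
      have h1 : spent (n + 1) u = spent n u + (if sel ⟨n, hnt⟩ = some u then w (u, ⟨n, hnt⟩) else 0) :=
        hupdate ⟨n, hnt⟩ u
      rw [h1, ih (le_of_lt hnt) u]
      have hsplit : ∀ i : Fin t,
          (if (i : ℕ) < n + 1 then (if sel i = some u then w (u, i) else 0) else 0)
          = (if (i : ℕ) < n then (if sel i = some u then w (u, i) else 0) else 0)
            + (if i = ⟨n, hnt⟩ then (if sel i = some u then w (u, i) else 0) else 0) := by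
        intro i
        have : i = ⟨n, hnt⟩ ↔ (i : ℕ) = n := by
          constructor
          · intro h; rw [h]
          · intro h; exact Fin.ext h
        split_ifs with h1 h2 h3 h2 h3 <;> simp_all <;> omega
      rw [Finset.sum_congr rfl (fun i _ => hsplit i), Finset.sum_add_distrib,
        Finset.sum_ite_eq' Finset.univ (⟨n, hnt⟩ : Fin t)]
      simp
  -- total spent equals algorithm value
  have halg : ∑ u : U, spent t u = ∑ i, gain i := by
    rw [Finset.sum_congr rfl (fun u _ => hform t le_rfl u), Finset.sum_comm]
    apply Finset.sum_congr rfl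
    intro i _
    have : ∀ u : U, (if (i : ℕ) < t then (if sel i = some u then w (u, i) else 0) else 0)
        = (if sel i = some u then w (u, i) else 0) := by
      intro u; rw [if_pos i.isLt]
    rw [Finset.sum_congr rfl (fun u _ => this u), hg]
    rcases h : sel i with _ | u'
    · simp [h]
    · simp only [h]
      rw [Finset.sum_eq_single u']
      · simp
      · intro b _ hb
        rw [if_neg]
        intro hc
        exact hb (Option.some_injective _ hc.symm)
      · simp
  -- key per-query inequality
  have key1 : ∀ i : Fin t, ∑ u : U, x (u, i) * w (u, i)
      ≤ gain i + ∑ u : U, (if ¬ spent i u < B u then x (u, i) * w (u, i) else 0) := by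
    intro i
    rcases h : sel i with _ | u'
    · have hall : ∀ u, ¬ spent i u < B u := hnone i h
      have : ∑ u : U, (if ¬ spent i u < B u then x (u, i) * w (u, i) else 0)
          = ∑ u : U, x (u, i) * w (u, i) := by
        apply Finset.sum_congr rfl; intro u _; rw [if_pos (hall u)]
      rw [this]
      have : gain i = 0 := by rw [hg]; simp [h]
      linarith
    · obtain ⟨hu', hmax⟩ := hsel i u' h
      have hgi : gain i = w (u', i) := by rw [hg]; simp [h]
      have hterm : ∀ u : U, x (u, i) * w (u, i)
          ≤ x (u, i) * w (u', i) + (if ¬ spent i u < B u then x (u, i) * w (u, i) else 0) := by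
        intro u
        by_cases hav : spent i u < B u
        · rw [if_neg (by simpa using hav)]
          have := hmax u hav
          nlinarith [hx0 u i]
        · rw [if_pos hav]
          nlinarith [hx0 u i, hw u i, (hu'.le.trans (le_of_eq rfl) : spent i u' ≤ B u'), hw u' i]
      calc ∑ u : U, x (u, i) * w (u, i)
          ≤ ∑ u : U, (x (u, i) * w (u', i)
              + (if ¬ spent i u < B u then x (u, i) * w (u, i) else 0)) :=
            Finset.sum_le_sum fun u _ => hterm u
        _ = (∑ u : U, x (u, i)) * w (u', i)
              + ∑ u : U, (if ¬ spent i u < B u then x (u, i) * w (u, i) else 0) := by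
            rw [Finset.sum_add_distrib, Finset.sum_mul]
        _ ≤ gain i + ∑ u : U, (if ¬ spent i u < B u then x (u, i) * w (u, i) else 0) := by
            rw [hgi]
            have h1 := hx1 i
            have h2 := hw u' i
            nlinarith
  -- key per-bidder inequality
  have key2 : ∀ u : U, ∑ i : Fin t, (if ¬ spent i u < B u then x (u, i) * w (u, i) else 0)
      ≤ spent t u := by
    intro u
    by_cases hsat : ∃ i : Fin t, ¬ spent i u < B u
    · obtain ⟨i₀, hi₀⟩ := hsat
      have h1 : ∑ i : Fin t, (if ¬ spent i u < B u then x (u, i) * w (u, i) else 0)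
          ≤ ∑ i : Fin t, x (u, i) * w (u, i) := by
        apply Finset.sum_le_sum
        intro i _
        split
        · exact le_rfl
        · exact mul_nonneg (hx0 u i) (hw u i)
      have h2 : B u ≤ spent i₀ u := not_lt.mp hi₀
      have h3 : spent i₀ u ≤ spent t u := hmono u i₀ t (le_of_lt i₀.isLt) le_rfl
      have h4 := hxB u
      linarith
    · push_neg at hsat
      have h1 : ∑ i : Fin t, (if ¬ spent i u < B u then x (u, i) * w (u, i) else 0) = 0 := by
        apply Finset.sum_eq_zero
        intro i _
        rw [if_neg (by simpa using hsat i)]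
      have h2 : (0:ℝ) ≤ spent t u := by
        have := hmono u 0 t (Nat.zero_le t) le_rfl
        rw [hspent0] at this
        exact this
      linarith
  -- assemble
  have hswap : ∑ u : U, ∑ i : Fin t, x (u, i) * w (u, i)
      = ∑ i : Fin t, ∑ u : U, x (u, i) * w (u, i) := Finset.sum_comm
  have main : ∑ u : U, ∑ i : Fin t, x (u, i) * w (u, i) ≤ 2 * ∑ i, gain i := by
    calc ∑ u : U, ∑ i : Fin t, x (u, i) * w (u, i)
        = ∑ i : Fin t, ∑ u : U, x (u, i) * w (u, i) := hswap
      _ ≤ ∑ i : Fin t, (gain i + ∑ u : U, (if ¬ spent i u < B u then x (u, i) * w (u, i) else 0)) :=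
          Finset.sum_le_sum fun i _ => key1 i
      _ = ∑ i, gain i + ∑ u : U, ∑ i : Fin t, (if ¬ spent i u < B u then x (u, i) * w (u, i) else 0) := by
          rw [Finset.sum_add_distrib, Finset.sum_comm (s := Finset.univ) (t := Finset.univ)]
      _ ≤ ∑ i, gain i + ∑ u : U, spent t u := by
          have := Finset.sum_le_sum (fun u (_ : u ∈ Finset.univ) => key2 u)
          linarith
      _ = 2 * ∑ i, gain i := by rw [halg]; ring
  linarith [main]
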